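/- For λ > −1 and ξ > 0, ∫₀^∞ e^{−2ξ/r} r^{−(λ+2)} dr = Γ(λ+1)/(2ξ)^{λ+1}. Consequently, the map V_λ sending ψ ∈ L²(ℂⁿ × ℝ₊, η) (where dη(w',ξ) = (2ξ/π)ⁿ e^{−2ξ|w'|²} dw' dξ) to the function (w',ξ,r) ↦ 2·√(π(2ξ)^{λ+n+1}/Γ(λ+n+2)) · e^{−ξ|w'|²} e^{−ξ/r} ψ(w',ξ) is an isometry into L²(ℂⁿ × ℝ × ℝ₊, ν_λ), where dν_λ(w',ξ,r) = (c_λ/(4 r^{λ+2})) dw' dξ dr and c_λ = Γ(λ+n+2)/(π^{n+1}Γ(λ+1)). -/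

import Mathlib

/-!
Under `r = 1/y` the `r`-integral becomes the Gamma integral `∫₀^∞ y^λ e^{-2ξy} dy`.
For `ξ > 0`, `|V_λψ|²` is a function of `(w', ξ)` times `e^{-2ξ/r}`, so by Tonelli the
`ν_λ`-integral over `r` can be done first; it contributes `Γ(λ+1)/(2ξ)^{λ+1}`, and
`c_λ · π(2ξ)^{λ+n+1}/Γ(λ+n+2) · Γ(λ+1)/(2ξ)^{λ+1} = (2ξ/π)ⁿ` is exactly the density of `η`.
For `ξ ≤ 0` both sides vanish.
-/

open MeasureTheory

/-- The normalization constant `c_λ = Γ(λ+n+2)/(π^{n+1} Γ(λ+1))`. -/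
noncomputable def clam (n : ℕ) (l : ℝ) : ℝ :=
  Real.Gamma (l + n + 2) / (Real.pi ^ (n + 1) * Real.Gamma (l + 1))

/-- The measure `dη(w',ξ) = (2ξ/π)ⁿ e^{−2ξ|w'|²} dw' dξ` on `ℂⁿ × ℝ₊`. -/
noncomputable def etaMeas (n : ℕ) : Measure ((Fin n → ℂ) × ℝ) :=
  (volume.restrict {q : (Fin n → ℂ) × ℝ | 0 < q.2}).withDensity fun q =>
    ENNReal.ofReal ((2 * q.2 / Real.pi) ^ n
      * Real.exp (-2 * q.2 * ∑ j, Complex.normSq (q.1 j)))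

/-- The measure `dν_λ(w',ξ,r) = (c_λ/(4 r^{λ+2})) dw' dξ dr` on `ℂⁿ × ℝ × ℝ₊`. -/
noncomputable def nulam (n : ℕ) (l : ℝ) : Measure ((Fin n → ℂ) × ℝ × ℝ) :=
  (volume.restrict {p : (Fin n → ℂ) × ℝ × ℝ | 0 < p.2.2}).withDensity fun p =>
    ENNReal.ofReal (clam n l / (4 * p.2.2 ^ (l + 2)))

/-- The renormalization operator `V_λ`. -/
noncomputable def Vlam (n : ℕ) (l : ℝ) (ψ : (Fin n → ℂ) × ℝ → ℂ)
    (p : (Fin n → ℂ) × ℝ × ℝ) : ℂ :=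
  if 0 < p.2.1 then
    ((2 * Real.sqrt (Real.pi * (2 * p.2.1) ^ (l + n + 1) / Real.Gamma (l + n + 2))
        * Real.exp (-p.2.1 * ∑ j, Complex.normSq (p.1 j))
        * Real.exp (-p.2.1 / p.2.2) : ℝ) : ℂ) * ψ (p.1, p.2.1)
  else 0

open Real Set

theorem exp_neg_div_mul_rpow_eq_comp_rpow_neg_one {a s x : ℝ} (hx : 0 < x) :
    exp (-a / x) * x ^ (-(s + 2)) =
      (|(-1 : ℝ)| * x ^ ((-1 : ℝ) - 1)) • ((x ^ (-1 : ℝ)) ^ s * exp (-(a * x ^ (-1 : ℝ)))) := by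
  rw [abs_neg, abs_one, one_mul, smul_eq_mul, Real.rpow_neg_one, Real.inv_rpow hx.le,
    ← Real.rpow_neg hx.le, ← mul_assoc, ← Real.rpow_add hx, mul_comm, div_eq_mul_inv, neg_mul]
  congr 2; ring

theorem integrableOn_exp_neg_div_mul_rpow {a s : ℝ} (ha : 0 < a) (hs : -1 < s) :
    IntegrableOn (fun r => exp (-a / r) * r ^ (-(s + 2))) (Ioi 0) := by
  have hg : IntegrableOn (fun y : ℝ => y ^ s * exp (-(a * y))) (Ioi 0) := by
    simpa [Real.rpow_one, neg_mul] using integrableOn_rpow_mul_exp_neg_mul_rpow hs zero_lt_one ha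
  exact ((integrableOn_Ioi_comp_rpow_iff _ (by norm_num : (-1 : ℝ) ≠ 0)).mpr hg).congr_fun
    (fun _ hx => (exp_neg_div_mul_rpow_eq_comp_rpow_neg_one hx).symm) measurableSet_Ioi

theorem integral_exp_neg_div_mul_rpow {a s : ℝ} (ha : 0 < a) (hs : -1 < s) :
    ∫ r in Ioi 0, exp (-a / r) * r ^ (-(s + 2)) = Gamma (s + 1) / a ^ (s + 1) := by
  calc ∫ r in Ioi 0, exp (-a / r) * r ^ (-(s + 2))
      = ∫ r in Ioi 0, (|(-1 : ℝ)| * r ^ ((-1 : ℝ) - 1)) •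
          ((r ^ (-1 : ℝ)) ^ s * exp (-(a * r ^ (-1 : ℝ)))) :=
        setIntegral_congr_fun measurableSet_Ioi fun _ hx =>
          exp_neg_div_mul_rpow_eq_comp_rpow_neg_one hx
    _ = ∫ y in Ioi 0, y ^ (s + 1 - 1) * exp (-(a * y)) := by
        rw [integral_comp_rpow_Ioi (fun y => y ^ s * exp (-(a * y))) (by norm_num)]
        simp
    _ = Gamma (s + 1) / a ^ (s + 1) := by
        rw [integral_rpow_mul_exp_neg_mul_Ioi (by linarith) ha, one_div, Real.inv_rpow ha.le,
          inv_mul_eq_div]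

theorem lintegral_exp_neg_div_mul_rpow {a s : ℝ} (ha : 0 < a) (hs : -1 < s) :
    ∫⁻ r in Ioi 0, ENNReal.ofReal (exp (-a / r) * r ^ (-(s + 2))) =
      ENNReal.ofReal (Gamma (s + 1) / a ^ (s + 1)) := by
  rw [← ofReal_integral_eq_lintegral_ofReal (integrableOn_exp_neg_div_mul_rpow ha hs),
    integral_exp_neg_div_mul_rpow ha hs]
  filter_upwards [ae_restrict_mem measurableSet_Ioi] with r (hr : 0 < r)
  positivity

theorem setLIntegral_preimage_snd {α β : Type*} [MeasurableSpace α] [MeasurableSpace β]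
    {μ : Measure α} {ν : Measure β} [SFinite μ] [SFinite ν] {t : Set β}
    {f : α × β → ENNReal} (hf : Measurable f) :
    ∫⁻ z in Prod.snd ⁻¹' t, f z ∂μ.prod ν = ∫⁻ x, ∫⁻ y in t, f (x, y) ∂ν ∂μ := by
  rw [← univ_prod, setLIntegral_prod f hf.aemeasurable, Measure.restrict_univ]

@[fun_prop]
theorem measurable_Vlam (n : ℕ) (l : ℝ) {ψ : (Fin n → ℂ) × ℝ → ℂ} (hψ : Measurable ψ) :
    Measurable (Vlam n l ψ) :=
  Measurable.ite (measurableSet_lt measurable_const (by fun_prop)) (by fun_prop) measurable_const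

theorem Vlam_of_nonpos (n : ℕ) (l : ℝ) (ψ : (Fin n → ℂ) × ℝ → ℂ) (w : Fin n → ℂ) {ξ : ℝ}
    (hξ : ξ ≤ 0) (r : ℝ) : Vlam n l ψ (w, ξ, r) = 0 :=
  if_neg hξ.not_gt

theorem clam_mul_mul_Gamma_div {n : ℕ} {l ξ : ℝ} (hl : -1 < l) (hξ : 0 < ξ) :
    clam n l * (π * (2 * ξ) ^ (l + n + 1) / Gamma (l + n + 2)) * (Gamma (l + 1) / (2 * ξ) ^ (l + 1))
      = (2 * ξ / π) ^ n := by
  have hG1 : 0 < Gamma (l + 1) := Gamma_pos_of_pos (by linarith)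
  have hG2 : 0 < Gamma (l + n + 2) := Gamma_pos_of_pos (by linarith [n.cast_nonneg (α := ℝ)])
  have hpow : (2 * ξ) ^ (l + n + 1) = (2 * ξ) ^ (l + 1) * (2 * ξ) ^ n := by
    rw [← Real.rpow_natCast, ← Real.rpow_add (by positivity)]
    ring_nf
  rw [clam, hpow, div_pow, pow_succ]
  field_simp

theorem coe_nnnorm_ofReal_mul_sq (x : ℝ) (z : ℂ) :
    (‖(x : ℂ) * z‖₊ : ENNReal) ^ 2 = ENNReal.ofReal (x ^ 2) * ‖z‖₊ ^ 2 := by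
  rw [nnnorm_mul, ENNReal.coe_mul, mul_pow, Complex.nnnorm_real, ← sq_abs,
    ENNReal.ofReal_pow (abs_nonneg x), ← Real.enorm_eq_ofReal_abs]
  rfl

theorem lintegral_Ioi_nulam_density_mul_Vlam {n : ℕ} {l : ℝ} (hl : -1 < l)
    (ψ : (Fin n → ℂ) × ℝ → ℂ) (w : Fin n → ℂ) {ξ : ℝ} (hξ : 0 < ξ) :
    ∫⁻ r in Ioi 0, ENNReal.ofReal (clam n l / (4 * r ^ (l + 2))) * ‖Vlam n l ψ (w, ξ, r)‖₊ ^ 2 =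
      ENNReal.ofReal ((2 * ξ / π) ^ n * exp (-2 * ξ * ∑ j, Complex.normSq (w j))) *
        ‖ψ (w, ξ)‖₊ ^ 2 := by
  set S := ∑ j, Complex.normSq (w j)
  set K := π * (2 * ξ) ^ (l + n + 1) / Gamma (l + n + 2)
  have hGn : 0 ≤ Gamma (l + n + 2) := Gamma_nonneg_of_nonneg (by linarith [n.cast_nonneg (α := ℝ)])
  have hK : 0 ≤ K := div_nonneg (by positivity) hGn
  have hclam : 0 ≤ clam n l :=
    div_nonneg hGn (mul_nonneg (by positivity) (Gamma_nonneg_of_nonneg (by linarith)))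
  have hpoint : ∀ r ∈ Ioi (0 : ℝ),
      ENNReal.ofReal (clam n l / (4 * r ^ (l + 2))) * ‖Vlam n l ψ (w, ξ, r)‖₊ ^ 2 =
        ENNReal.ofReal (clam n l * K * exp (-2 * ξ * S)) * ‖ψ (w, ξ)‖₊ ^ 2 *
          ENNReal.ofReal (exp (-(2 * ξ) / r) * r ^ (-(l + 2))) := by
    intro r (hr : 0 < r)
    have hreal : clam n l / (4 * r ^ (l + 2)) * (2 * √K * exp (-ξ * S) * exp (-ξ / r)) ^ 2 =
        clam n l * K * exp (-2 * ξ * S) * (exp (-(2 * ξ) / r) * r ^ (-(l + 2))) := by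
      rw [mul_pow, mul_pow, mul_pow, sq_sqrt hK, ← exp_nat_mul, ← exp_nat_mul,
        Real.rpow_neg hr.le]
      field_simp
      ring_nf
    rw [Vlam, if_pos hξ, coe_nnnorm_ofReal_mul_sq, ← mul_assoc,
      ← ENNReal.ofReal_mul (by positivity), hreal, ENNReal.ofReal_mul (by positivity)]
    ring
  rw [setLIntegral_congr_fun measurableSet_Ioi hpoint, lintegral_const_mul' _ _
      (ENNReal.mul_ne_top ENNReal.ofReal_ne_top (by simp)),
    lintegral_exp_neg_div_mul_rpow (by positivity) hl, mul_right_comm,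
    ← ENNReal.ofReal_mul (by positivity)]
  congr 2
  rw [mul_right_comm, clam_mul_mul_Gamma_div hl hξ]

/-- `∫₀^∞ e^{−2ξ/r} r^{−(λ+2)} dr = Γ(λ+1)/(2ξ)^{λ+1}`, and consequently `V_λ`
is an isometry from `L²(ℂⁿ × ℝ₊, η)` into `L²(ℂⁿ × ℝ × ℝ₊, ν_λ)`. -/
theorem Vlam_isometry (n : ℕ) (l : ℝ) (hl : -1 < l) :
    (∀ ξ : ℝ, 0 < ξ →
      ∫ r in Set.Ioi (0 : ℝ), Real.exp (-2 * ξ / r) * r ^ (-(l + 2)) =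
        Real.Gamma (l + 1) / (2 * ξ) ^ (l + 1)) ∧
    (∀ ψ : (Fin n → ℂ) × ℝ → ℂ, Measurable ψ →
      ∫⁻ p, (‖Vlam n l ψ p‖₊ : ENNReal) ^ 2 ∂(nulam n l) =
        ∫⁻ q, (‖ψ q‖₊ : ENNReal) ^ 2 ∂(etaMeas n)) := by
  refine ⟨fun ξ hξ => by rw [neg_mul]; exact integral_exp_neg_div_mul_rpow (by positivity) hl,
    fun ψ hψ => ?_⟩
  have hsetν : {p : (Fin n → ℂ) × ℝ × ℝ | 0 < p.2.2} = Prod.snd ⁻¹' (Prod.snd ⁻¹' Ioi 0) := rfl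
  have hsetη : {q : (Fin n → ℂ) × ℝ | 0 < q.2} = Prod.snd ⁻¹' Ioi 0 := rfl
  rw [nulam, etaMeas, lintegral_withDensity_eq_lintegral_mul _ (by fun_prop) (by fun_prop),
    lintegral_withDensity_eq_lintegral_mul _ (by fun_prop) (by fun_prop), hsetν, hsetη,
    Measure.volume_eq_prod (Fin n → ℂ) (ℝ × ℝ), Measure.volume_eq_prod (Fin n → ℂ) ℝ,
    setLIntegral_preimage_snd (by fun_prop), setLIntegral_preimage_snd (by fun_prop)]
  refine lintegral_congr fun w => ?_
  rw [Measure.volume_eq_prod, setLIntegral_preimage_snd (by fun_prop),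
    ← lintegral_indicator measurableSet_Ioi]
  refine lintegral_congr fun ξ => ?_
  rcases le_or_gt ξ 0 with hξ | hξ
  · simp [Vlam_of_nonpos n l ψ w hξ, hξ.not_gt]
  · rw [indicator_of_mem (mem_Ioi.mpr hξ)]
    exact lintegral_Ioi_nulam_density_mul_Vlam hl ψ w hξ
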